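/- arXiv:1404.5846 — 3 statements merged into one kernel-verified Lean document; each statement's English description precedes it below -/
import Mathlib

section
/- Let ρ : [1,∞) → [0,∞) be nonincreasing with ∫_1^∞ ρ(r)/r dr < ∞, and let σ ∈ (0,1]. Define Θ_σ(T) = inf_{0 < R ≤ T} ( ρ(R) + (R/T)^σ ) for T ≥ 1. Then ∫_1^∞ Θ_σ(r)/r dr < ∞. -/
open MeasureTheory Set Real

/-- `Θ_σ(T) = inf_{0 < R ≤ T} (ρ(R) + (R/T)^σ)`. -/
noncomputable def Theta (ρ : ℝ → ℝ) (σ T : ℝ) : ℝ :=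
  sInf {v : ℝ | ∃ R : ℝ, 0 < R ∧ R ≤ T ∧ v = ρ R + (R / T) ^ σ}

theorem theta_integrable (ρ : ℝ → ℝ) (σ : ℝ) (hσ0 : 0 < σ) (hσ1 : σ ≤ 1)
    (hρ0 : ∀ R : ℝ, 1 ≤ R → 0 ≤ ρ R)
    (hρanti : ∀ x y : ℝ, 1 ≤ x → x ≤ y → ρ y ≤ ρ x)
    (hρext : ∀ R : ℝ, 0 < R → R < 1 → ρ R = ρ 1)
    (hint : MeasureTheory.IntegrableOn (fun r => ρ r / r) (Set.Ici (1 : ℝ))) :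
    MeasureTheory.IntegrableOn (fun r => Theta ρ σ r / r) (Set.Ici (1 : ℝ)) := by
  have hρ0' : ∀ R : ℝ, 0 < R → 0 ≤ ρ R := by
    intro R hR
    rcases le_or_gt 1 R with h | h
    · exact hρ0 R h
    · rw [hρext R hR h]; exact hρ0 1 le_rfl
  -- basic facts about the defining set
  have hbdd : ∀ T : ℝ, 0 < T →
      BddBelow {v : ℝ | ∃ R : ℝ, 0 < R ∧ R ≤ T ∧ v = ρ R + (R / T) ^ σ} := by
    intro T hT
    refine ⟨0, ?_⟩
    rintro v ⟨R, hR0, hRT, rfl⟩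
    have h1 : (0:ℝ) ≤ (R / T) ^ σ := Real.rpow_nonneg (by positivity) σ
    have h2 : 0 ≤ ρ R := hρ0' R hR0
    linarith
  have hne : ∀ T : ℝ, 1 ≤ T →
      Set.Nonempty {v : ℝ | ∃ R : ℝ, 0 < R ∧ R ≤ T ∧ v = ρ R + (R / T) ^ σ} := by
    intro T hT
    exact ⟨ρ T + (T / T) ^ σ, T, by linarith, le_rfl, rfl⟩
  have hnn : ∀ T : ℝ, 1 ≤ T → 0 ≤ Theta ρ σ T := by
    intro T hT
    apply Real.sInf_nonneg
    rintro v ⟨R, hR0, hRT, rfl⟩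
    have h1 : (0:ℝ) ≤ (R / T) ^ σ := Real.rpow_nonneg (by positivity) σ
    have h2 : 0 ≤ ρ R := hρ0' R hR0
    linarith
  -- upper bound via R = √T
  have hub : ∀ T : ℝ, 1 ≤ T → Theta ρ σ T ≤ ρ (Real.sqrt T) + T ^ (-(σ / 2)) := by
    intro T hT
    have hT0 : (0:ℝ) < T := by linarith
    have hs1 : 1 ≤ Real.sqrt T := Real.one_le_sqrt.mpr hT
    have hsle : Real.sqrt T ≤ T := by
      nlinarith [Real.sq_sqrt hT0.le, Real.sqrt_nonneg T]
    apply csInf_le (hbdd T hT0)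
    refine ⟨Real.sqrt T, by linarith, hsle, ?_⟩
    have hdiv : Real.sqrt T / T = T ^ ((1/2 : ℝ) - 1) := by
      rw [Real.rpow_sub hT0, Real.rpow_one, Real.sqrt_eq_rpow]
    congr 1
    rw [hdiv, ← Real.rpow_mul hT0.le]
    congr 1
    ring
  -- antitonicity of Θ on [1, ∞)
  have hanti : AntitoneOn (Theta ρ σ) (Set.Ici (1:ℝ)) := by
    intro T₁ h1 T₂ h2 h12
    simp only [Set.mem_Ici] at h1 h2
    apply le_csInf (hne T₁ h1)
    rintro v ⟨R, hR0, hRT, rfl⟩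
    have key : Theta ρ σ T₂ ≤ ρ R + (R / T₂) ^ σ :=
      csInf_le (hbdd T₂ (by linarith)) ⟨R, hR0, hRT.trans h12, rfl⟩
    refine key.trans ?_
    have hdivle : R / T₂ ≤ R / T₁ := by gcongr <;> linarith
    have := Real.rpow_le_rpow (by positivity : (0:ℝ) ≤ R / T₂) hdivle hσ0.le
    linarith
  -- measurability
  have hmeas : AEMeasurable (fun r => Theta ρ σ r / r)
      (volume.restrict (Set.Ici (1:ℝ))) :=
    (aemeasurable_restrict_of_antitoneOn measurableSet_Ici hanti).div
      measurable_id.aemeasurable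
  -- the dominating function
  set g : ℝ → ℝ := fun r => ρ (Real.sqrt r) / r + r ^ (-(1 + σ / 2)) with hg
  -- integrability of the first part of g via change of variables r = x²
  have himg : (fun x : ℝ => x ^ 2) '' Set.Ici 1 = Set.Ici (1:ℝ) := by
    ext y
    constructor
    · rintro ⟨x, hx, rfl⟩
      simp only [Set.mem_Ici] at hx ⊢
      nlinarith
    · intro hy
      simp only [Set.mem_Ici] at hy
      exact ⟨Real.sqrt y, Real.one_le_sqrt.mpr hy, Real.sq_sqrt (by linarith)⟩
  have hcv := integrableOn_image_iff_integrableOn_abs_deriv_smul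
      (measurableSet_Ici (a := (1:ℝ)))
      (f := fun x : ℝ => x ^ 2) (f' := fun x : ℝ => 2 * x)
      (fun x _ => by simpa using (hasDerivAt_pow 2 x).hasDerivWithinAt)
      (by
        intro x hx y hy hxy
        simp only [Set.mem_Ici] at hx hy
        simp only at hxy
        nlinarith)
      (fun r => ρ (Real.sqrt r) / r)
  rw [himg] at hcv
  have hint1 : IntegrableOn (fun r => ρ (Real.sqrt r) / r) (Set.Ici (1:ℝ)) := by
    rw [hcv]
    have h2 : IntegrableOn (fun x => 2 * (ρ x / x)) (Set.Ici (1:ℝ)) := hint.const_mul 2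
    refine h2.congr_fun ?_ measurableSet_Ici
    intro x hx
    simp only [Set.mem_Ici] at hx
    have hx0 : (0:ℝ) < x := by linarith
    have hsq : Real.sqrt (x ^ 2) = x := Real.sqrt_sq hx0.le
    simp only [smul_eq_mul, hsq, abs_of_pos (by positivity : (0:ℝ) < 2 * x)]
    field_simp
  -- integrability of the second part of g
  have hint2 : IntegrableOn (fun r : ℝ => r ^ (-(1 + σ / 2))) (Set.Ici (1:ℝ)) := by
    rw [integrableOn_Ici_iff_integrableOn_Ioi]
    exact integrableOn_Ioi_rpow_of_lt (by linarith) one_pos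
  have hgint : IntegrableOn g (Set.Ici (1:ℝ)) := hint1.add hint2
  -- conclude by domination
  refine hgint.mono' hmeas.aestronglyMeasurable ?_
  filter_upwards [ae_restrict_mem measurableSet_Ici] with r hr
  simp only [Set.mem_Ici] at hr
  have hr0 : (0:ℝ) < r := by linarith
  have h1 : 0 ≤ Theta ρ σ r / r := div_nonneg (hnn r hr) hr0.le
  rw [Real.norm_eq_abs, abs_of_nonneg h1]
  have h2 : Theta ρ σ r / r ≤ (ρ (Real.sqrt r) + r ^ (-(σ / 2))) / r := by
    gcongr
    exact hub r hr
  refine h2.trans ?_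
  have h3 : r ^ (-(σ / 2)) / r = r ^ (-(1 + σ / 2)) := by
    rw [div_eq_mul_inv, ← Real.rpow_neg_one r, ← Real.rpow_add hr0]
    ring_nf
  rw [add_div, h3]
end

section
/- Suppose λ ∈ ℝ^m satisfies the Diophantine condition |n·λ| ≥ c₀ |n|^{−τ} for all n ∈ ℤ^m \ {0}, where c₀ > 0 and τ > 0. Let f(t) = e^{2πi(n·λ)t} for a fixed n ∈ ℤ^m \ {0}, let R, ℓ be positive integers with N = 2Rℓ, and let I_n = (1/N) Σ_{j=−R}^{R−1} Σ_{k=0}^{ℓ−1} f(j + k/ℓ). Then |I_n| ≤ C ( ℓ^{−1} |n| + R^{−1} |n|^τ ), where C depends only on |λ|, c₀ and τ. -/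
/-!
With `α = n·λ` and `w = e(α/ℓ)`, the grid sum factors as `(∑ⱼ (wˡ)ʲ) (∑ₖ wᵏ)`; multiplying by
`w - 1` telescopes it to a difference of two unimodular numbers, so it is at most
`2 / |w - 1| ≤ ℓ / (2|α|)` by Jordan's inequality as long as `|α| ≤ ℓ/2`. Otherwise the trivial
bound `|I_n| ≤ 1 ≤ 2|α|/ℓ` applies. Thus `|I_n| ≤ 2|α|/ℓ + 1/(4R|α|)`, and Cauchy–Schwarz
`|α| ≤ |n||λ|` together with the Diophantine bound `1/|α| ≤ |n|^τ/c₀` gives the claim.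
-/

open Finset Complex

lemma geom_sum_Ico_zpow_mul {K : Type*} [DivisionRing K] {x : K} (hx : x ≠ 0) {m n : ℤ}
    (hmn : m ≤ n) : (∑ i ∈ Ico m n, x ^ i) * (x - 1) = x ^ n - x ^ m := by
  induction n, hmn using Int.leInduction with
  | base => simp
  | succ n hmn ih =>
    rw [← insert_Ico_right_eq_Ico_add_one hmn, sum_insert (by simp), add_mul, ih,
      zpow_add_one₀ hx, mul_sub, mul_one]
    abel

lemma norm_sum_zpow_pow_mul_geom_sum_mul_norm_sub_one_le {K : Type*} [NormedField K] {w : K}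
    (hw : ‖w‖ = 1) (R ℓ : ℕ) :
    ‖(∑ j ∈ Ico (-(R : ℤ)) R, (w ^ ℓ) ^ j) * ∑ k ∈ range ℓ, w ^ k‖ * ‖w - 1‖ ≤ 2 := by
  have hu : w ^ ℓ ≠ 0 := pow_ne_zero _ (norm_ne_zero_iff.mp (by simp [hw]))
  rw [← norm_mul, mul_assoc, geom_sum_mul, geom_sum_Ico_zpow_mul hu (by omega)]
  calc _ ≤ ‖(w ^ ℓ) ^ (R : ℤ)‖ + ‖(w ^ ℓ) ^ (-(R : ℤ))‖ := norm_sub_le _ _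
    _ = 2 := by simp [hw]; norm_num

lemma two_div_pi_mul_abs_le_norm_exp_I_mul_ofReal_sub_one {x : ℝ} (hx : |x| ≤ Real.pi) :
    2 / Real.pi * |x| ≤ ‖exp (I * x) - 1‖ := by
  have hsin := Real.mul_abs_le_abs_sin (x := x / 2) (by rw [abs_div]; linarith)
  rw [abs_div, abs_two] at hsin
  rw [norm_exp_I_mul_ofReal_sub_one, norm_mul, Real.norm_two, Real.norm_eq_abs]
  linarith

lemma abs_sum_mul_le_sqrt_mul_sqrt {ι : Type*} (s : Finset ι) (f g : ι → ℝ) :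
    |∑ i ∈ s, f i * g i| ≤ √(∑ i ∈ s, f i ^ 2) * √(∑ i ∈ s, g i ^ 2) := by
  rw [← Real.sqrt_mul (sum_nonneg fun _ _ => sq_nonneg _)]
  exact Real.abs_le_sqrt (sum_mul_sq_le_sq_mul_sq s f g)

lemma sum_sq_intCast_pos {ι : Type*} [Fintype ι] {n : ι → ℤ} (hn : n ≠ 0) :
    0 < ∑ i, (n i : ℝ) ^ 2 := by
  obtain ⟨i, hi⟩ := Function.ne_iff.mp hn
  have hi : (n i : ℝ) ≠ 0 := by exact_mod_cast hi
  exact sum_pos' (fun _ _ => sq_nonneg _) ⟨i, mem_univ _, by positivity⟩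

noncomputable def gridSum (α : ℝ) (R ℓ : ℕ) : ℂ :=
  ∑ j ∈ Icc (-(R : ℤ)) ((R : ℤ) - 1), ∑ k ∈ range ℓ,
    exp (2 * (Real.pi : ℂ) * I * (α : ℂ) * (((j : ℝ) + (k : ℝ) / (ℓ : ℝ) : ℝ) : ℂ))

lemma gridSum_eq_mul (α : ℝ) (R : ℕ) {ℓ : ℕ} (hℓ : ℓ ≠ 0) :
    gridSum α R ℓ = (∑ j ∈ Ico (-(R : ℤ)) R, (exp (I * ↑(2 * Real.pi * α / ℓ)) ^ ℓ) ^ j) *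
      ∑ k ∈ range ℓ, exp (I * ↑(2 * Real.pi * α / ℓ)) ^ k := by
  rw [gridSum, Icc_sub_one_right_eq_Ico, sum_mul_sum]
  refine sum_congr rfl fun j _ => sum_congr rfl fun k _ => ?_
  rw [← exp_nat_mul, ← exp_int_mul, ← exp_nat_mul, ← exp_add]
  congr 1
  push_cast
  field_simp

lemma norm_gridSum_le (α : ℝ) (R ℓ : ℕ) : ‖gridSum α R ℓ‖ ≤ 2 * R * ℓ := by
  have hterm : ∀ t : ℝ, ‖exp (2 * (Real.pi : ℂ) * I * (α : ℂ) * (t : ℂ))‖ = 1 := fun t => by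
    rw [show 2 * (Real.pi : ℂ) * I * α * t = ↑(2 * Real.pi * α * t) * I by push_cast; ring]
    exact norm_exp_ofReal_mul_I _
  calc ‖gridSum α R ℓ‖
      ≤ ∑ j ∈ Icc (-(R : ℤ)) ((R : ℤ) - 1), ∑ k ∈ range ℓ, (1 : ℝ) :=
        norm_sum_le_of_le _ fun j _ => norm_sum_le_of_le _ fun k _ => (hterm _).le
    _ = 2 * R * ℓ := by
        simp only [sum_const, card_range, Int.card_Icc, nsmul_eq_mul, mul_one]
        rw [show ((R : ℤ) - 1 + 1 - -(R : ℤ)).toNat = 2 * R by omega]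
        push_cast; ring

lemma norm_gridSum_le_of_abs_le {α : ℝ} (hα : α ≠ 0) (R : ℕ) {ℓ : ℕ} (hℓ : 0 < ℓ)
    (hαℓ : |α| ≤ ℓ / 2) : ‖gridSum α R ℓ‖ ≤ ℓ / (2 * |α|) := by
  have hℓ' : (0 : ℝ) < ℓ := by exact_mod_cast hℓ
  set x := 2 * Real.pi * α / ℓ
  have habs_x : |x| = 2 * Real.pi * |α| / ℓ := by
    simp only [x, abs_div, abs_mul, Nat.abs_cast, abs_of_pos Real.pi_pos, abs_two]
  have hx : |x| ≤ Real.pi := by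
    rw [habs_x, div_le_iff₀ hℓ']; nlinarith [Real.pi_pos]
  have hlow : 4 * |α| / ℓ ≤ ‖exp (I * x) - 1‖ := by
    calc 4 * |α| / ℓ = 2 / Real.pi * |x| := by rw [habs_x]; field_simp; ring
      _ ≤ _ := two_div_pi_mul_abs_le_norm_exp_I_mul_ofReal_sub_one hx
  have key := norm_sum_zpow_pow_mul_geom_sum_mul_norm_sub_one_le (norm_exp_I_mul_ofReal x) R ℓ
  have h := (mul_le_mul_of_nonneg_left hlow (norm_nonneg _)).trans key
  rw [mul_div_assoc', div_le_iff₀ hℓ'] at h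
  rw [gridSum_eq_mul α R hℓ.ne', le_div_iff₀ (by positivity)]
  linarith

lemma norm_gridAverage_le {α : ℝ} (hα : α ≠ 0) {R ℓ : ℕ} (hR : 0 < R) (hℓ : 0 < ℓ) :
    ‖(((2 * R * ℓ : ℕ) : ℝ))⁻¹ • gridSum α R ℓ‖ ≤
      2 * |α| * (ℓ : ℝ)⁻¹ + (4 * |α|)⁻¹ * (R : ℝ)⁻¹ := by
  have hR' : (0 : ℝ) < R := by exact_mod_cast hR
  have hℓ' : (0 : ℝ) < ℓ := by exact_mod_cast hℓ
  have hα' : 0 < |α| := abs_pos.mpr hα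
  rw [norm_smul, norm_inv, Real.norm_natCast]
  push_cast
  rcases le_or_gt |α| (ℓ / 2) with hαℓ | hαℓ
  · calc _ ≤ (2 * R * ℓ : ℝ)⁻¹ * (ℓ / (2 * |α|)) := by
          gcongr; exact norm_gridSum_le_of_abs_le hα R hℓ hαℓ
      _ = (4 * |α|)⁻¹ * (R : ℝ)⁻¹ := by field_simp; ring
      _ ≤ _ := le_add_of_nonneg_left (by positivity)
  · calc _ ≤ (2 * R * ℓ : ℝ)⁻¹ * (2 * R * ℓ) := by gcongr; exact norm_gridSum_le α R ℓ
      _ = 1 := inv_mul_cancel₀ (by positivity)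
      _ ≤ 2 * |α| * (ℓ : ℝ)⁻¹ := by rw [← div_eq_mul_inv, le_div_iff₀ hℓ']; linarith
      _ ≤ _ := le_add_of_nonneg_right (by positivity)

theorem exponential_sum_bound_general (m : ℕ) (lam : Fin m → ℝ) (c₀ τ : ℝ)
    (hc₀ : 0 < c₀)
    (hdio : ∀ n : Fin m → ℤ, n ≠ 0 →
      c₀ * Real.sqrt (∑ i, ((n i : ℝ)) ^ 2) ^ (-τ) ≤ |∑ i, (n i : ℝ) * lam i|) :
    ∃ C : ℝ, 0 < C ∧ ∀ (n : Fin m → ℤ), n ≠ 0 → ∀ (R ℓ : ℕ), 0 < R → 0 < ℓ →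
      ‖(((2 * R * ℓ : ℕ) : ℝ))⁻¹ •
          ∑ j ∈ Finset.Icc (-(R : ℤ)) ((R : ℤ) - 1), ∑ k ∈ Finset.range ℓ,
            Complex.exp (2 * (Real.pi : ℂ) * Complex.I *
              ((∑ i, (n i : ℝ) * lam i : ℝ) : ℂ) *
              (((j : ℝ) + (k : ℝ) / (ℓ : ℝ) : ℝ) : ℂ))‖
        ≤ C * ((ℓ : ℝ)⁻¹ * Real.sqrt (∑ i, ((n i : ℝ)) ^ 2)
            + (R : ℝ)⁻¹ * Real.sqrt (∑ i, ((n i : ℝ)) ^ 2) ^ τ) := by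
  refine ⟨2 * √(∑ i, lam i ^ 2) + (4 * c₀)⁻¹, by positivity, fun n hn R ℓ hR hℓ => ?_⟩
  set L := √(∑ i, lam i ^ 2)
  set N := √(∑ i, (n i : ℝ) ^ 2)
  set α := ∑ i, (n i : ℝ) * lam i
  have hN : 0 < N := Real.sqrt_pos.mpr (sum_sq_intCast_pos hn)
  have hdio' : c₀ * (N ^ τ)⁻¹ ≤ |α| := by rw [← Real.rpow_neg hN.le]; exact hdio n hn
  have hα : α ≠ 0 := abs_pos.mp ((by positivity : 0 < c₀ * (N ^ τ)⁻¹).trans_le hdio')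
  have hα_inv : |α|⁻¹ ≤ c₀⁻¹ * N ^ τ := by
    simpa [mul_inv, mul_comm] using inv_anti₀ (by positivity) hdio'
  have hα_le : |α| ≤ N * L := abs_sum_mul_le_sqrt_mul_sqrt _ _ _
  have hcross : 0 ≤ 2 * L * ((R : ℝ)⁻¹ * N ^ τ) + (4 * c₀)⁻¹ * ((ℓ : ℝ)⁻¹ * N) := by positivity
  calc _ ≤ 2 * |α| * (ℓ : ℝ)⁻¹ + (4 * |α|)⁻¹ * (R : ℝ)⁻¹ := norm_gridAverage_le hα hR hℓ
    _ ≤ 2 * (N * L) * (ℓ : ℝ)⁻¹ + 4⁻¹ * (c₀⁻¹ * N ^ τ) * (R : ℝ)⁻¹ := by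
        rw [mul_inv]; gcongr
    _ ≤ _ := by rw [mul_inv]; linear_combination hcross

theorem exponential_sum_bound (m : ℕ) (lam : Fin m → ℝ) (c₀ τ : ℝ)
    (hc₀ : 0 < c₀) (hτ : 0 < τ)
    (hdio : ∀ n : Fin m → ℤ, n ≠ 0 →
      c₀ * Real.sqrt (∑ i, ((n i : ℝ)) ^ 2) ^ (-τ) ≤ |∑ i, (n i : ℝ) * lam i|) :
    ∃ C : ℝ, 0 < C ∧ ∀ (n : Fin m → ℤ), n ≠ 0 → ∀ (R ℓ : ℕ), 0 < R → 0 < ℓ →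
      ‖(((2 * R * ℓ : ℕ) : ℝ))⁻¹ •
          ∑ j ∈ Finset.Icc (-(R : ℤ)) ((R : ℤ) - 1), ∑ k ∈ Finset.range ℓ,
            Complex.exp (2 * (Real.pi : ℂ) * Complex.I *
              ((∑ i, (n i : ℝ) * lam i : ℝ) : ℂ) *
              (((j : ℝ) + (k : ℝ) / (ℓ : ℝ) : ℝ) : ℂ))‖
        ≤ C * ((ℓ : ℝ)⁻¹ * Real.sqrt (∑ i, ((n i : ℝ)) ^ 2)
            + (R : ℝ)⁻¹ * Real.sqrt (∑ i, ((n i : ℝ)) ^ 2) ^ τ) :=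
  exponential_sum_bound_general m lam c₀ τ hc₀ hdio
end

section
/- Let f : ℝ^d → ℝ be measurable and supported in a ball 2B = B(x₀, 2r), d ≥ 3, and suppose that M := sup_{y ∈ B(x₀,r), 0 < t < r} t^{2−σ} ( ⨍_{B(y,t)} |f|² )^{1/2} < ∞ for some σ ∈ (0,1). Then for every x ∈ B(x₀, r) and every s ∈ (0, r), ∫_{B(x, s)} |f(y)| / |x − y|^{d−2} dy ≤ C s^σ M, where C depends only on d and σ. -/
/-!
On `B(x, t)` with `t = s / 2 ^ j`, Cauchy–Schwarz and the Morrey bound give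
`∫ |f| ≤ |B(x, t)| M t ^ (σ - 2) = κ M t ^ (d - 2 + σ)`, where `κ = |B(0, 1)|`, while on the
dyadic annulus `s / 2 ^ (j + 1) ≤ |x - y| < s / 2 ^ j` the kernel `|x - y| ^ (2 - d)` is at most
`(s / 2 ^ (j + 1)) ^ (2 - d)`. The `j`-th annulus thus contributes at most
`2 ^ (d - 2) κ M s ^ σ (2 ^ (-σ)) ^ j`, and since `σ > 0` the geometric series converges.
-/

open MeasureTheory Metric Set
open scoped ENNReal

theorem exists_dyadic_mem_Ico {ρ s : ℝ} (hρ : 0 < ρ) (hρs : ρ < s) :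
    ∃ j : ℕ, ρ ∈ Ico (s / 2 ^ (j + 1)) (s / 2 ^ j) := by
  obtain ⟨n, hn, hn'⟩ := exists_mem_Ioc_zpow (div_pos (hρ.trans hρs) hρ) one_lt_two
  have hn0 : 0 ≤ n := by
    by_contra! h
    linarith [(one_lt_div hρ).2 hρs,
      zpow_le_one_of_nonpos₀ (one_le_two (α := ℝ)) (by omega : n + 1 ≤ 0)]
  lift n to ℕ using hn0
  rw [zpow_natCast, lt_div_iff₀ hρ] at hn
  rw [show (n : ℤ) + 1 = ((n + 1 : ℕ) : ℤ) by push_cast; rfl, zpow_natCast, div_le_iff₀ hρ] at hn'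
  exact ⟨n, (div_le_iff₀ (by positivity)).2 (by linarith),
    (lt_div_iff₀ (by positivity)).2 (by linarith)⟩

theorem div_two_pow_succ_rpow_neg_mul_div_two_pow_rpow_add {s β γ : ℝ} (hs : 0 < s) (j : ℕ) :
    (s / 2 ^ (j + 1)) ^ (-β) * (s / 2 ^ j) ^ (β + γ) = 2 ^ β * s ^ γ * (2 ^ (-γ)) ^ j := by
  have hu : 0 < s / 2 ^ j := by positivity
  calc (s / 2 ^ (j + 1)) ^ (-β) * (s / 2 ^ j) ^ (β + γ)
      = 2 ^ β * ((s / 2 ^ j) ^ (-β) * (s / 2 ^ j) ^ (β + γ)) := by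
        rw [pow_succ, ← div_div, Real.div_rpow hu.le zero_le_two, Real.rpow_neg zero_le_two,
          div_inv_eq_mul]
        ring
    _ = 2 ^ β * (s / 2 ^ j) ^ γ := by rw [← Real.rpow_add hu]; ring_nf
    _ = 2 ^ β * s ^ γ * (2 ^ (-γ)) ^ j := by
        rw [Real.div_rpow hs.le (by positivity), ← Real.rpow_natCast 2 j,
          ← Real.rpow_mul zero_le_two, ← Real.rpow_natCast, ← Real.rpow_mul zero_le_two,
          div_eq_mul_inv, ← Real.rpow_neg zero_le_two]
        ring_nf

theorem lintegral_ball_mul_dist_rpow_neg_le {α : Type*} [MetricSpace α] [MeasurableSpace α]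
    [OpensMeasurableSpace α] {μ : Measure α} [NullSingletonClass μ] {g : α → ℝ≥0∞} {x : α}
    {s β γ : ℝ} {c : ℝ≥0∞} (hs : 0 < s) (hβ : 0 ≤ β) (hγ : 0 < γ)
    (hg : ∀ t ∈ Ioc 0 s, ∫⁻ y in ball x t, g y ∂μ ≤ c * ENNReal.ofReal (t ^ (β + γ))) :
    ∫⁻ y in ball x s, g y * ENNReal.ofReal (dist x y ^ (-β)) ∂μ ≤
      c * ENNReal.ofReal (2 ^ β / (1 - 2 ^ (-γ)) * s ^ γ) := by
  set T : ℕ → ℝ := fun j => s / 2 ^ j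
  set A : ℕ → Set α := fun j => ball x (T j) \ ball x (T (j + 1))
  have hq0 : (0 : ℝ) ≤ 2 ^ (-γ) := by positivity
  have hq1 : (2 : ℝ) ^ (-γ) < 1 := Real.rpow_lt_one_of_one_lt_of_neg one_lt_two (by linarith)
  have hcover : ball x s \ {x} ⊆ ⋃ j, A j := by
    rintro y ⟨hy, hyx⟩
    obtain ⟨j, hj⟩ := exists_dyadic_mem_Ico (dist_pos.2 (Ne.symm hyx)) (mem_ball'.1 hy)
    exact mem_iUnion.2 ⟨j, mem_ball'.2 hj.2, fun h => (mem_ball'.1 h).not_ge hj.1⟩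
  have hannulus (j : ℕ) : ∫⁻ y in A j, g y * ENNReal.ofReal (dist x y ^ (-β)) ∂μ ≤
      c * ENNReal.ofReal (2 ^ β * s ^ γ * (2 ^ (-γ)) ^ j) := by
    calc ∫⁻ y in A j, g y * ENNReal.ofReal (dist x y ^ (-β)) ∂μ
        ≤ ∫⁻ y in A j, g y * ENNReal.ofReal (T (j + 1) ^ (-β)) ∂μ := by
          refine setLIntegral_mono' (measurableSet_ball.diff measurableSet_ball) fun y hy => ?_
          exact mul_le_mul' le_rfl (ENNReal.ofReal_le_ofReal (Real.rpow_le_rpow_of_nonpos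
            (by positivity) (not_lt.1 (hy.2 ∘ mem_ball'.2)) (neg_nonpos.2 hβ)))
      _ ≤ (∫⁻ y in ball x (T j), g y ∂μ) * ENNReal.ofReal (T (j + 1) ^ (-β)) := by
          rw [lintegral_mul_const' _ _ ENNReal.ofReal_ne_top]
          gcongr
          exact sdiff_subset
      _ ≤ c * ENNReal.ofReal (T j ^ (β + γ)) * ENNReal.ofReal (T (j + 1) ^ (-β)) := by
          gcongr
          exact hg _ ⟨by positivity, div_le_self hs.le (one_le_pow₀ one_le_two)⟩
      _ = c * ENNReal.ofReal (2 ^ β * s ^ γ * (2 ^ (-γ)) ^ j) := by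
          rw [mul_assoc, ← ENNReal.ofReal_mul (by positivity), mul_comm (T j ^ _),
            div_two_pow_succ_rpow_neg_mul_div_two_pow_rpow_add hs]
  calc ∫⁻ y in ball x s, g y * ENNReal.ofReal (dist x y ^ (-β)) ∂μ
      = ∫⁻ y in ball x s \ {x}, g y * ENNReal.ofReal (dist x y ^ (-β)) ∂μ :=
        setLIntegral_congr (sdiff_null_ae_eq_self (measure_singleton x)).symm
    _ ≤ ∑' j, ∫⁻ y in A j, g y * ENNReal.ofReal (dist x y ^ (-β)) ∂μ :=
        (lintegral_mono_set hcover).trans (lintegral_iUnion_le _ _)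
    _ ≤ ∑' j, c * ENNReal.ofReal (2 ^ β * s ^ γ * (2 ^ (-γ)) ^ j) := ENNReal.tsum_le_tsum hannulus
    _ = c * ENNReal.ofReal (2 ^ β / (1 - 2 ^ (-γ)) * s ^ γ) := by
        rw [ENNReal.tsum_mul_left, ← ENNReal.ofReal_tsum_of_nonneg (fun j => by positivity)
          ((summable_geometric_of_lt_one hq0 hq1).mul_left _), tsum_mul_left,
          tsum_geometric_of_lt_one hq0 hq1]
        ring_nf

theorem setLIntegral_abs_le_measure_mul_sqrt_setAverage_sq {α : Type*} [MeasurableSpace α]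
    {μ : Measure α} {s : Set α} {f : α → ℝ} (hs : μ s ≠ ∞)
    (hf : AEStronglyMeasurable f (μ.restrict s)) (hf2 : IntegrableOn (fun y => f y ^ 2) s μ) :
    ∫⁻ y in s, ENNReal.ofReal |f y| ∂μ ≤ μ s * ENNReal.ofReal √(⨍ y in s, f y ^ 2 ∂μ) := by
  rcases eq_or_ne (μ s) 0 with hs0 | hs0
  · simp [Measure.restrict_eq_zero.2 hs0]
  have : IsFiniteMeasure (μ.restrict s) := isFiniteMeasure_restrict.2 hs
  have hfi : IntegrableOn f s μ := ((memLp_two_iff_integrable_sq hf).2 hf2).integrable one_le_two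
  have hjensen : ⨍ y in s, |f y| ∂μ ≤ √(⨍ y in s, f y ^ 2 ∂μ) := by
    refine Real.le_sqrt_of_sq_le ?_
    simpa only [sq_abs] using (convexOn_pow 2).map_set_average_le (continuousOn_pow 2)
      isClosed_Ici hs0 hs (ae_of_all _ fun y => abs_nonneg (f y)) hfi.abs
      (by simpa only [Function.comp_def, sq_abs] using hf2)
  rw [← ofReal_integral_eq_lintegral_ofReal hfi.abs (ae_of_all _ fun y => abs_nonneg _),
    ← measure_smul_setAverage _ hs, smul_eq_mul, ENNReal.ofReal_mul measureReal_nonneg,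
    ofReal_measureReal hs]
  gcongr

theorem lintegral_ball_abs_le_of_morrey {E : Type*} [NormedAddCommGroup E] [NormedSpace ℝ E]
    [FiniteDimensional ℝ E] [MeasurableSpace E] [BorelSpace E] [Nontrivial E]
    (μ : Measure E) [μ.IsAddHaarMeasure] {f : E → ℝ} {x : E} {t l M : ℝ} (ht : 0 < t)
    (hf : AEStronglyMeasurable f (μ.restrict (ball x t)))
    (hf2 : IntegrableOn (fun y => f y ^ 2) (ball x t) μ)
    (hM : t ^ l * √(⨍ y in ball x t, f y ^ 2 ∂μ) ≤ M) :
    ∫⁻ y in ball x t, ENNReal.ofReal |f y| ∂μ ≤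
      ENNReal.ofReal M * μ (ball 0 1) * ENNReal.ofReal (t ^ (Module.finrank ℝ E - l)) := by
  have hM0 : 0 ≤ M := (by positivity : 0 ≤ t ^ l * √(⨍ y in ball x t, f y ^ 2 ∂μ)).trans hM
  have hsqrt : √(⨍ y in ball x t, f y ^ 2 ∂μ) ≤ M * t ^ (-l) := by
    rw [Real.rpow_neg ht.le, ← div_eq_mul_inv, le_div_iff₀' (by positivity)]
    exact hM
  calc ∫⁻ y in ball x t, ENNReal.ofReal |f y| ∂μ
      ≤ μ (ball x t) * ENNReal.ofReal √(⨍ y in ball x t, f y ^ 2 ∂μ) :=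
        setLIntegral_abs_le_measure_mul_sqrt_setAverage_sq measure_ball_lt_top.ne hf hf2
    _ ≤ μ (ball x t) * ENNReal.ofReal (M * t ^ (-l)) := by gcongr
    _ = ENNReal.ofReal M * μ (ball 0 1) * ENNReal.ofReal (t ^ (Module.finrank ℝ E - l)) := by
        rw [Measure.addHaar_ball μ x ht.le, sub_eq_add_neg, Real.rpow_add ht,
          Real.rpow_natCast, ENNReal.ofReal_mul hM0, ENNReal.ofReal_mul (by positivity)]
        ring

theorem morrey_riesz_potential_bound_general (d : ℕ) (hd : 3 ≤ d) (σ : ℝ)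
    (hσ0 : 0 < σ) :
    ∃ C : ℝ, 0 < C ∧
      ∀ (f : EuclideanSpace ℝ (Fin d) → ℝ) (x₀ : EuclideanSpace ℝ (Fin d)) (r M : ℝ),
        0 < r → Measurable f →
        (∀ y, y ∉ ball x₀ (2 * r) → f y = 0) →
        IntegrableOn (fun z => (f z) ^ 2) (ball x₀ (2 * r)) →
        (∀ y ∈ ball x₀ r, ∀ t : ℝ, 0 < t → t < r →
          t ^ (2 - σ) * Real.sqrt (⨍ z in ball y t, (f z) ^ 2) ≤ M) →
        ∀ x ∈ ball x₀ r, ∀ s : ℝ, 0 < s → s < r →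
          (∫ y in ball x s, |f y| / dist x y ^ ((d : ℝ) - 2)) ≤ C * s ^ σ * M := by
  have : NeZero d := ⟨by omega⟩
  set κ := volume (ball (0 : EuclideanSpace ℝ (Fin d)) 1)
  have hκtop : κ ≠ ∞ := measure_ball_lt_top.ne
  have hκ : 0 < κ.toReal := ENNReal.toReal_pos (measure_ball_pos _ _ one_pos).ne' hκtop
  have hβ : (0 : ℝ) ≤ d - 2 := by
    have : (3 : ℝ) ≤ d := by exact_mod_cast hd
    linarith
  have hq : (2 : ℝ) ^ (-σ) < 1 := Real.rpow_lt_one_of_one_lt_of_neg one_lt_two (neg_neg_of_pos hσ0)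
  refine ⟨κ.toReal * (2 ^ ((d : ℝ) - 2) / (1 - 2 ^ (-σ))),
    mul_pos hκ (div_pos (by positivity) (sub_pos.2 hq)), ?_⟩
  intro f x₀ r M _ hf _ hf2 hmorrey x hx s hs hsr
  have hM : 0 ≤ M := (mul_nonneg (by positivity) (Real.sqrt_nonneg _)).trans (hmorrey x hx s hs hsr)
  have hball (t : ℝ) (ht : t ∈ Ioc 0 s) : ∫⁻ y in ball x t, ENNReal.ofReal |f y| ≤
      ENNReal.ofReal M * κ * ENNReal.ofReal (t ^ ((d : ℝ) - 2 + σ)) := by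
    have hsub : ball x t ⊆ ball x₀ (2 * r) :=
      ball_subset_ball' (by linarith [ht.2, mem_ball.1 hx])
    have := lintegral_ball_abs_le_of_morrey volume ht.1 hf.aestronglyMeasurable
      (hf2.mono_set hsub) (hmorrey x hx t ht.1 (ht.2.trans_lt hsr))
    rwa [finrank_euclideanSpace_fin, show (d : ℝ) - (2 - σ) = d - 2 + σ by ring] at this
  rw [integral_eq_lintegral_of_nonneg_ae (ae_of_all _ fun y => by positivity)
    (by fun_prop : Measurable fun y => |f y| / dist x y ^ ((d : ℝ) - 2)).aestronglyMeasurable]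
  refine ENNReal.toReal_le_of_le_ofReal (by positivity) ?_
  calc ∫⁻ y in ball x s, ENNReal.ofReal (|f y| / dist x y ^ ((d : ℝ) - 2))
      = ∫⁻ y in ball x s, ENNReal.ofReal |f y| * ENNReal.ofReal (dist x y ^ (-((d : ℝ) - 2))) := by
        simp_rw [Real.rpow_neg dist_nonneg, ← ENNReal.ofReal_mul (abs_nonneg _), div_eq_mul_inv]
    _ ≤ ENNReal.ofReal M * κ * ENNReal.ofReal (2 ^ ((d : ℝ) - 2) / (1 - 2 ^ (-σ)) * s ^ σ) :=
        lintegral_ball_mul_dist_rpow_neg_le hs hβ hσ0 hball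
    _ = ENNReal.ofReal (κ.toReal * (2 ^ ((d : ℝ) - 2) / (1 - 2 ^ (-σ))) * s ^ σ * M) := by
        conv_lhs => rw [← ENNReal.ofReal_toReal hκtop, ← ENNReal.ofReal_mul hM,
          ← ENNReal.ofReal_mul (by positivity)]
        ring_nf

theorem morrey_riesz_potential_bound (d : ℕ) (hd : 3 ≤ d) (σ : ℝ)
    (hσ0 : 0 < σ) (hσ1 : σ < 1) :
    ∃ C : ℝ, 0 < C ∧
      ∀ (f : EuclideanSpace ℝ (Fin d) → ℝ) (x₀ : EuclideanSpace ℝ (Fin d)) (r M : ℝ),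
        0 < r → Measurable f →
        (∀ y, y ∉ ball x₀ (2 * r) → f y = 0) →
        IntegrableOn (fun z => (f z) ^ 2) (ball x₀ (2 * r)) →
        (∀ y ∈ ball x₀ r, ∀ t : ℝ, 0 < t → t < r →
          t ^ (2 - σ) * Real.sqrt (⨍ z in ball y t, (f z) ^ 2) ≤ M) →
        ∀ x ∈ ball x₀ r, ∀ s : ℝ, 0 < s → s < r →
          (∫ y in ball x s, |f y| / dist x y ^ ((d : ℝ) - 2)) ≤ C * s ^ σ * M :=
  morrey_riesz_potential_bound_general d hd σ hσ0
end
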